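/- Probe correctness for 1D partitioning: given target load B, the greedy procedure that repeatedly takes the longest interval whose load is at most B succeeds in partitioning the array into at most m intervals if and only if there exists a partition of the array into m contiguous intervals with maximum load at most B (assuming every single entry is at most B). -/
import Mathlib


open Classical in
/-- Greedy probe step: from position `p`, the end of the longest interval
`[p, p + k) ⊆ [0, n)` whose load is at most `B`. -/
noncomputable def probeCut (f : ℕ → ℝ) (B : ℝ) (n p : ℕ) : ℕ :=
  p + Nat.findGreatest
    (fun k => p + k ≤ n ∧ (∑ i ∈ Finset.Ico p (p + k), f i) ≤ B) (n - p)

/-- Cut points produced by the greedy probe procedure. -/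
noncomputable def probeCuts (f : ℕ → ℝ) (B : ℝ) (n : ℕ) : ℕ → ℕ
  | 0 => 0
  | j + 1 => probeCut f B n (probeCuts f B n j)

open Classical in
lemma le_probeCut (f : ℕ → ℝ) (B : ℝ) (n p : ℕ) : p ≤ probeCut f B n p :=
  Nat.le_add_right _ _

open Classical in
lemma probeCut_le (f : ℕ → ℝ) (B : ℝ) (n p : ℕ) (hp : p ≤ n) :
    probeCut f B n p ≤ n := by
  have := Nat.findGreatest_le
    (P := fun k => p + k ≤ n ∧ (∑ i ∈ Finset.Ico p (p + k), f i) ≤ B) (n - p)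
  unfold probeCut
  omega

open Classical in
lemma probeCut_sum (f : ℕ → ℝ) (B : ℝ) (hB : 0 ≤ B) (n p : ℕ) :
    (∑ i ∈ Finset.Ico p (probeCut f B n p), f i) ≤ B := by
  unfold probeCut
  set P : ℕ → Prop := fun k => p + k ≤ n ∧ (∑ i ∈ Finset.Ico p (p + k), f i) ≤ B with hP
  have hiff := (Nat.findGreatest_eq_iff (P := P) (k := n - p)
    (m := Nat.findGreatest P (n - p))).mp rfl
  rcases Nat.eq_zero_or_pos (Nat.findGreatest P (n - p)) with h | h
  · rw [h]
    simpa using hB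
  · exact (hiff.2.1 (by omega)).2

open Classical in
lemma probeCut_ge (f : ℕ → ℝ) (B : ℝ) (hf : ∀ i, 0 ≤ f i) (n p q : ℕ)
    (hpq : p ≤ q) (hqn : q ≤ n)
    (hsum : (∑ i ∈ Finset.Ico p q, f i) ≤ B) :
    q ≤ probeCut f B n p := by
  unfold probeCut
  have : q - p ≤ Nat.findGreatest
      (fun k => p + k ≤ n ∧ (∑ i ∈ Finset.Ico p (p + k), f i) ≤ B) (n - p) := by
    apply Nat.le_findGreatest (by omega)
    constructor
    · omega
    · have : p + (q - p) = q := by omega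
      rw [this]; exact hsum
  omega

/-- Probe correctness: if every entry of the non-negative array
is at most `B`, the greedy procedure taking maximal intervals of load at most
`B` covers the array within `m` intervals if and only if some partition into `m`
contiguous intervals has maximum interval load at most `B`. -/
theorem stmt_17 (n m : ℕ) (hm : 1 ≤ m) (f : ℕ → ℝ) (hf : ∀ i, 0 ≤ f i)
    (B : ℝ) (hB : 0 ≤ B) (hentry : ∀ i < n, f i ≤ B) :
    probeCuts f B n m = n ↔
      ∃ c : ℕ → ℕ, Monotone c ∧ c 0 = 0 ∧ c m = n ∧
        ∀ j < m, (∑ i ∈ Finset.Ico (c j) (c (j + 1)), f i) ≤ B := by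
  constructor
  · intro h
    refine ⟨probeCuts f B n, ?_, rfl, h, ?_⟩
    · exact monotone_nat_of_le_succ fun j => le_probeCut f B n _
    · intro j _
      exact probeCut_sum f B hB n _
  · rintro ⟨c, hmono, hc0, hcm, hload⟩
    have hle : ∀ j, probeCuts f B n j ≤ n := by
      intro j
      induction j with
      | zero => exact Nat.zero_le n
      | succ j ih => exact probeCut_le f B n _ ih
    have hge : ∀ j ≤ m, c j ≤ probeCuts f B n j := by
      intro j hj
      induction j with
      | zero => simp [hc0, probeCuts]
      | succ j ih =>
        have hj' : j < m := hj
        have ihv := ih (le_of_lt hj')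
        set p := probeCuts f B n j with hp
        rcases le_or_gt (c (j + 1)) p with h | h
        · exact le_trans h (le_probeCut f B n p)
        · apply probeCut_ge f B hf n p (c (j+1)) (le_of_lt h)
          · have : c (j+1) ≤ c m := hmono (by omega)
            omega
          · refine le_trans ?_ (hload j hj')
            apply Finset.sum_le_sum_of_subset_of_nonneg
            · apply Finset.Ico_subset_Ico ihv le_rfl
            · intro i _ _; exact hf i
    have h1 := hge m le_rfl
    have h2 := hle m
    omega
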